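/- arXiv:2010.06378 — 3 statements merged into one kernel-verified Lean document; each statement's English description precedes it below -/
import Mathlib

section
/- Let G be a simple graph on a nonempty finite vertex type V with |V| = n which is k-regular, let μ : V → ℝ be the eigenvalues of its real adjacency matrix (counted with multiplicity), and let v₀ : V be an index with μ v₀ = k (such an index exists since G is k-regular). Then E(G) = E(Gᶜ) if and only if (n : ℝ) = 2*k + 1 - ∑_{v ∈ V, v ≠ v₀} (|1 + μ v| - |μ v|). -/
open Finset

/-- The adjacency matrix of a simple graph over `ℝ` is Hermitian. -/
lemma adjMatrix_isHermitian {V : Type*} [Fintype V] (G : SimpleGraph V) [DecidableRel G.Adj] :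
    (G.adjMatrix ℝ).IsHermitian := by
  rw [Matrix.IsHermitian, Matrix.conjTranspose_eq_transpose_of_trivial]
  exact G.isSymm_adjMatrix

/-- The eigenvalues (with multiplicity) of the real adjacency matrix of a simple graph. -/
noncomputable def adjEig {V : Type*} [Fintype V] [DecidableEq V] (G : SimpleGraph V) : V → ℝ := by
  classical
  exact (adjMatrix_isHermitian G).eigenvalues

/-- The energy of a graph : the sum of the absolute values of its adjacency eigenvalues. -/
noncomputable def energy {V : Type*} [Fintype V] [DecidableEq V] (G : SimpleGraph V) : ℝ :=
  ∑ i, |adjEig G i|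

/-- The characteristic polynomial of the real adjacency matrix of a simple graph. -/
noncomputable def charpolyOf {V : Type*} [Fintype V] [DecidableEq V] (G : SimpleGraph V) :
    Polynomial ℝ := by
  classical
  exact (G.adjMatrix ℝ).charpoly

/-!
For a `k`-regular graph the all-ones vector `𝟙` is an eigenvector of `A = A(G)` with eigenvalue `k`,
and `A(Gᶜ) = J - I - A` with `J = 𝟙𝟙ᵀ`. Since `(x + 1) I + A` maps `𝟙` to `(x + 1 + k) 𝟙`, the
matrix determinant lemma gives
`(x + 1 + k) det (x I - A(Gᶜ)) = (x + 1 + k - n) det ((x + 1) I + A)` for all `x ≠ -1 - k`;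
comparing the roots of the characteristic polynomials, the spectrum of `Gᶜ` is `n - 1 - k` together with `-1 - μ v` for `v ≠ v₀`. Hence
`E(Gᶜ) = n - 1 - k + ∑_{v ≠ v₀} |1 + μ v|` while `E(G) = k + ∑_{v ≠ v₀} |μ v|`.
-/

namespace Matrix

variable {m : Type*} [Fintype m] [DecidableEq m]

theorem IsHermitian.det_smul_one_sub {𝕜 : Type*} [RCLike 𝕜] {A : Matrix m m 𝕜}
    (hA : A.IsHermitian) (x : 𝕜) : (x • 1 - A).det = ∏ i, (x - hA.eigenvalues i) := by
  rw [smul_one_eq_diagonal, ← scalar_apply, ← eval_charpoly, hA.charpoly_eq]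
  simp [Polynomial.eval_prod]

theorem IsHermitian.det_smul_one_add {𝕜 : Type*} [RCLike 𝕜] {A : Matrix m m 𝕜}
    (hA : A.IsHermitian) (x : 𝕜) : (x • 1 + A).det = ∏ i, (x + hA.eigenvalues i) := by
  rw [show x • 1 + A = -((-x) • 1 - A) by rw [neg_smul, neg_sub, sub_neg_eq_add, add_comm],
    det_neg, hA.det_smul_one_sub, ← Finset.card_univ, ← Finset.prod_neg]
  simp [add_comm]

theorem mul_det_sub_of_one_of_mulVec_const {K : Type*} [Field K] {A : Matrix m m K} {c : K}
    (hc : c ≠ 0) (hA : A *ᵥ (fun _ => 1) = fun _ => c) :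
    c * (A - of 1).det = (c - Fintype.card m) * A.det := by
  have hAu : A *ᵥ (fun _ => -c⁻¹) = fun _ => -1 := by
    rw [show (fun _ : m => -c⁻¹) = -c⁻¹ • (fun _ => (1 : K)) by ext; simp, mulVec_smul, hA]
    ext; simp [hc]
  have hfactor : A - of 1 =
      A * (1 + replicateCol Unit (fun _ => -c⁻¹) * replicateRow Unit (fun _ => (1 : K))) := by
    rw [Matrix.mul_add, Matrix.mul_one, ← Matrix.mul_assoc, ← replicateCol_mulVec, hAu]
    ext; simp [sub_eq_add_neg, mul_apply]
  rw [hfactor, det_mul, det_one_add_replicateCol_mul_replicateRow]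
  simp only [dotProduct, mul_neg, one_mul, sum_neg_distrib, sum_const, card_univ, nsmul_eq_mul]
  field_simp
  ring

end Matrix

open Polynomial in
theorem Multiset.eq_of_infinite_prod_map_sub_eq {R : Type*} [CommRing R] [IsDomain R]
    {s t : Multiset R}
    (h : {x | (s.map (x - ·)).prod = (t.map (x - ·)).prod}.Infinite) : s = t := by
  have hpoly : (s.map fun a => X - C a).prod = (t.map fun a => X - C a).prod := by
    refine eq_of_infinite_eval_eq _ _ (h.mono fun x hx => ?_)
    simpa [eval_multiset_prod, Multiset.map_map, Function.comp_def] using hx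
  simpa using congrArg roots hpoly

theorem SimpleGraph.adjMatrix_compl_eq_of_one_sub_one_sub {V α : Type*} [DecidableEq V]
    [AddCommGroup α] [One α] (G : SimpleGraph V) [DecidableRel G.Adj] :
    Gᶜ.adjMatrix α = Matrix.of 1 - 1 - G.adjMatrix α := by
  rw [← adjMatrix_completeGraph_eq_of_one_sub_one,
    ← IsCompl.adjMatrix_add_adjMatrix_eq_adjMatrix_completeGraph α (isCompl_compl (x := G)),
    add_sub_cancel_left]

section Regular

variable {V : Type*} [Fintype V] [DecidableEq V] {G : SimpleGraph V} [DecidableRel G.Adj]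

theorem adjEig_eq_eigenvalues : adjEig G = (adjMatrix_isHermitian G).eigenvalues := by
  unfold adjEig
  congr!

variable {k : ℕ}

theorem mul_prod_sub_adjEig_compl (hreg : G.IsRegularOfDegree k) {x : ℝ} (hx : x + 1 + k ≠ 0) :
    (x + 1 + k) * ∏ v, (x - adjEig Gᶜ v) =
      (x + 1 + k - Fintype.card V) * ∏ v, (x + 1 + adjEig G v) := by
  have hsub := (adjMatrix_isHermitian Gᶜ).det_smul_one_sub x
  have hadd := (adjMatrix_isHermitian G).det_smul_one_add (x + 1)
  simp only [RCLike.ofReal_real_eq_id, id] at hsub hadd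
  rw [adjEig_eq_eigenvalues, adjEig_eq_eigenvalues, ← hsub, ← hadd,
    G.adjMatrix_compl_eq_of_one_sub_one_sub,
    show x • 1 - (Matrix.of 1 - 1 - G.adjMatrix ℝ) = ((x + 1) • 1 + G.adjMatrix ℝ) - Matrix.of 1 by
      module]
  refine Matrix.mul_det_sub_of_one_of_mulVec_const hx ?_
  ext v
  simp [Matrix.add_mulVec, Matrix.smul_mulVec, add_assoc, hreg v]

theorem map_adjEig_compl (hreg : G.IsRegularOfDegree k) {v₀ : V} (hv₀ : adjEig G v₀ = k) :
    univ.val.map (adjEig Gᶜ) =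
      ((Fintype.card V : ℝ) - 1 - k) ::ₘ (univ.erase v₀).val.map (fun v => -1 - adjEig G v) := by
  refine Multiset.eq_of_infinite_prod_map_sub_eq
    (((Set.finite_singleton (-1 - (k : ℝ))).infinite_compl).mono fun x hx => ?_)
  have hc : x + 1 + k ≠ 0 := fun h => hx (by simp; linarith)
  have hsplit : ∏ v, (x + 1 + adjEig G v) =
      (x + 1 + k) * ∏ v ∈ univ.erase v₀, (x + 1 + adjEig G v) := by
    rw [← mul_prod_erase _ _ (mem_univ v₀), hv₀]
  have hdet := mul_prod_sub_adjEig_compl hreg hc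
  rw [hsplit, mul_left_comm] at hdet
  simp only [Set.mem_ofPred_eq, Multiset.map_cons, Multiset.prod_cons, Multiset.map_map,
    Function.comp_def, prod_map_val]
  rw [mul_left_cancel₀ hc hdet]
  congr 1
  · ring
  · exact prod_congr rfl fun v _ => by ring

theorem energy_compl_of_isRegularOfDegree (hreg : G.IsRegularOfDegree k) {v₀ : V}
    (hv₀ : adjEig G v₀ = k) :
    energy Gᶜ = (Fintype.card V - 1 - k) + ∑ v ∈ univ.erase v₀, |1 + adjEig G v| := by
  have hk : (k : ℝ) + 1 ≤ Fintype.card V := by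
    exact_mod_cast hreg v₀ ▸ G.degree_lt_card_verts v₀
  calc energy Gᶜ = ((univ.val.map (adjEig Gᶜ)).map abs).sum := by
        simp [energy, Multiset.map_map]
    _ = _ := by
        rw [map_adjEig_compl hreg hv₀, Multiset.map_cons, Multiset.sum_cons, Multiset.map_map,
          Function.comp_def, sum_map_val, abs_of_nonneg (by linarith)]
        congr 1
        exact sum_congr rfl fun v _ => by rw [← abs_neg, neg_sub, sub_neg_eq_add, add_comm]

end Regular

theorem energy_eq_energy_compl_iff_general {V : Type*} [Fintype V] [DecidableEq V]
    (G : SimpleGraph V) [DecidableRel G.Adj] (n k : ℕ)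
    (hn : Fintype.card V = n) (hreg : G.IsRegularOfDegree k)
    (v₀ : V) (hv₀ : adjEig G v₀ = (k : ℝ)) :
    energy G = energy Gᶜ ↔
      (n : ℝ) = 2 * (k : ℝ) + 1 -
        ∑ v ∈ Finset.univ.erase v₀, (|1 + adjEig G v| - |adjEig G v|) := by
  have hG : energy G = k + ∑ v ∈ univ.erase v₀, |adjEig G v| := by
    rw [energy, ← add_sum_erase _ _ (mem_univ v₀), hv₀, abs_of_nonneg k.cast_nonneg]
  rw [hG, energy_compl_of_isRegularOfDegree hreg hv₀, hn, sum_sub_distrib]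
  constructor <;> intro h <;> linarith

/-- For a `k`-regular simple graph `G` on `n` vertices with adjacency
eigenvalues `μ = adjEig G` and `v₀` an index with eigenvalue `k`, one has
`E(G) = E(Gᶜ)` iff `n = 2k + 1 - ∑_{v ≠ v₀} (|1 + μ v| - |μ v|)`. -/
theorem energy_eq_energy_compl_iff {V : Type*} [Fintype V] [DecidableEq V] [Nonempty V]
    (G : SimpleGraph V) [DecidableRel G.Adj] (n k : ℕ)
    (hn : Fintype.card V = n) (hreg : G.IsRegularOfDegree k)
    (v₀ : V) (hv₀ : adjEig G v₀ = (k : ℝ)) :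
    energy G = energy Gᶜ ↔
      (n : ℝ) = 2 * (k : ℝ) + 1 -
        ∑ v ∈ Finset.univ.erase v₀, (|1 + adjEig G v| - |adjEig G v|) :=
  energy_eq_energy_compl_iff_general G n k hn hreg v₀ hv₀
end

section
/- For every t ≥ 2 there exist a simple graph G on Fin (2*t) and k : ℕ such that G is k-regular, E(G) = E(Gᶜ), and G and Gᶜ are not isospectral. -/
open Finset

attribute [local instance] Classical.propDecidable

/-!
Take the prism `K₂ □ Kₜ`. It is `t`-regular and its complement, the crown graph `K₂ × Kₜ`, is
`(t-1)`-regular; since `tr A² = 2t·k` is determined by the spectrum, they are not isospectral.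
Write `S = A(K₂) ⊗ 1` and `B = 1 ⊗ A(Kₜ)`: these commute, `S² = 1` and `(B + 1)(B - (t-1)) = 0`,
and the two adjacency matrices are `S + B` and `S B`. Hence the prism has spectrum in
`{t, t-2, 0, -2}` and the crown in `{±1, ±(t-1)}`. On each of these sets `|x|` agrees with a
polynomial `q`, so the energy is `tr q(A)`, which the same relations evaluate to `4(t-1)` in both
cases.
-/
open Polynomial Matrix SimpleGraph
open scoped Kronecker

namespace Matrix.IsHermitian

variable {n m : Type*} [Fintype n] [DecidableEq n] [Fintype m] [DecidableEq m] {A : Matrix n n ℝ}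

theorem trace_aeval (hA : A.IsHermitian) (q : ℝ[X]) :
    (aeval A q).trace = ∑ i, q.eval (hA.eigenvalues i) := by
  rw [← cfc_polynomial q A hA.isSelfAdjoint, hA.cfc_eq, IsHermitian.cfc,
    Unitary.conjStarAlgAut_apply, trace_mul_cycle, Unitary.coe_star_mul_self, one_mul,
    trace_diagonal]
  simp

theorem isRoot_eigenvalues_of_aeval_eq_zero (hA : A.IsHermitian) {p : ℝ[X]}
    (hp : aeval A p = 0) (i : n) : p.IsRoot (hA.eigenvalues i) := by
  have : Nonempty n := ⟨i⟩
  have := spectrum.subset_polynomial_aeval A p ⟨_, hA.eigenvalues_mem_spectrum_real i, rfl⟩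
  simpa [hp, spectrum.zero_eq] using this

theorem sum_eigenvalues_eq_of_charpoly_eq (hA : A.IsHermitian) {B : Matrix m m ℝ}
    (hB : B.IsHermitian) (h : A.charpoly = B.charpoly) (f : ℝ → ℝ) :
    ∑ i, f (hA.eigenvalues i) = ∑ j, f (hB.eigenvalues j) := by
  have key := congrArg (fun s => (s.map f).sum)
    (hA.roots_charpoly_eq_eigenvalues.symm.trans (h ▸ hB.roots_charpoly_eq_eigenvalues))
  simp only [Multiset.map_map] at key
  exact key

end Matrix.IsHermitian

section Involution

variable {R : Type*} [CommRing R] [Algebra ℝ R] {τ : ℝ} {s b : R}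

theorem aeval_add_cubic_of_mul_self_eq_one (hs : s * s = 1)
    (hb : (b + 1) * (b - algebraMap ℝ R (τ - 1)) = 0) :
    aeval (s + b) (X * (X - C τ) * (X - C (τ - 2))) =
      algebraMap ℝ R (τ + 2) * ((1 - s) * (b - algebraMap ℝ R (τ - 1))) := by
  simp only [map_mul, map_sub, aeval_X, aeval_C, map_add, map_one, map_ofNat] at hb ⊢
  linear_combination (s + b + 2 * (b - (algebraMap ℝ R τ - 1))) * hs +
    (3 * s + b - algebraMap ℝ R τ) * hb

theorem aeval_add_quartic_of_mul_self_eq_one (hs : s * s = 1)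
    (hb : (b + 1) * (b - algebraMap ℝ R (τ - 1)) = 0) :
    aeval (s + b) (X * (X + 2) * (X - C τ) * (X - C (τ - 2))) = 0 := by
  have hcubic := aeval_add_cubic_of_mul_self_eq_one hs hb
  simp only [map_mul, map_sub, aeval_X, aeval_C, map_add, map_one, map_ofNat] at hb hcubic ⊢
  linear_combination (s + b + 2) * hcubic + (algebraMap ℝ R τ + 2) * (1 - s) * hb -
    (algebraMap ℝ R τ + 2) * (b - (algebraMap ℝ R τ - 1)) * hs

theorem aeval_mul_quartic_of_mul_self_eq_one (hs : s * s = 1)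
    (hb : (b + 1) * (b - algebraMap ℝ R (τ - 1)) = 0) :
    aeval (s * b) ((X ^ 2 - 1) * (X ^ 2 - C ((τ - 1) ^ 2))) = 0 := by
  simp only [map_mul, map_sub, aeval_X, aeval_C, map_pow, map_one] at hb ⊢
  linear_combination (b - 1) * (b + (algebraMap ℝ R τ - 1)) * hb +
    b ^ 2 * (2 * b ^ 2 - 1 - (algebraMap ℝ R τ - 1) ^ 2 + (s * s - 1) * b ^ 2) * hs

end Involution

namespace SimpleGraph

def Iso.compl {V W : Type*} {G : SimpleGraph V} {H : SimpleGraph W} (e : G ≃g H) : Gᶜ ≃g Hᶜ :=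
  ⟨e.toEquiv, by simp [e.map_adj_iff]⟩

theorem Iso.isRegularOfDegree {V W : Type*} [Fintype V] [Fintype W] {G : SimpleGraph V}
    {H : SimpleGraph W} [DecidableRel G.Adj] [DecidableRel H.Adj] (e : G ≃g H) {k : ℕ}
    (hG : G.IsRegularOfDegree k) : H.IsRegularOfDegree k := fun w => by
  rw [← e.apply_symm_apply w, e.degree_eq, hG]

theorem IsRegularOfDegree.trace_adjMatrix_mul_self {V : Type*} [Fintype V] {G : SimpleGraph V}
    [DecidableRel G.Adj] {k : ℕ} (hG : G.IsRegularOfDegree k) :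
    (G.adjMatrix ℝ * G.adjMatrix ℝ).trace = Fintype.card V * k := by
  simp only [Matrix.trace, diag_apply, adjMatrix_mul_self_apply_self, hG.degree_eq]
  simp

section Spectrum

variable {V W : Type*} [Fintype V] [DecidableEq V] [Fintype W] [DecidableEq W]
  {G : SimpleGraph V} {H : SimpleGraph W}

theorem energy_eq_sum_abs_eigenvalues [DecidableRel G.Adj] :
    energy G = ∑ i, |(adjMatrix_isHermitian G).eigenvalues i| := by
  unfold energy adjEig
  congr!

theorem charpolyOf_eq_charpoly [DecidableRel G.Adj] :
    charpolyOf G = (G.adjMatrix ℝ).charpoly := by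
  unfold charpolyOf
  congr!

theorem energy_eq_trace_aeval [DecidableRel G.Adj] {p q : ℝ[X]}
    (hp : aeval (G.adjMatrix ℝ) p = 0) (hq : ∀ x, p.IsRoot x → |x| = q.eval x) :
    energy G = (aeval (G.adjMatrix ℝ) q).trace := by
  rw [energy_eq_sum_abs_eigenvalues, (adjMatrix_isHermitian G).trace_aeval]
  exact Finset.sum_congr rfl fun i _ =>
    hq _ ((adjMatrix_isHermitian G).isRoot_eigenvalues_of_aeval_eq_zero hp i)

theorem Iso.energy_eq (e : G ≃g H) : energy G = energy H := by
  rw [energy_eq_sum_abs_eigenvalues, energy_eq_sum_abs_eigenvalues]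
  exact (adjMatrix_isHermitian G).sum_eigenvalues_eq_of_charpoly_eq _
    (by rw [← e.reindex_adjMatrix ℝ, charpoly_reindex]) _

theorem IsRegularOfDegree.eq_of_charpolyOf_eq [Nonempty V] {H : SimpleGraph V}
    [DecidableRel G.Adj] [DecidableRel H.Adj] {k l : ℕ} (hG : G.IsRegularOfDegree k)
    (hH : H.IsRegularOfDegree l) (h : charpolyOf G = charpolyOf H) : k = l := by
  rw [charpolyOf_eq_charpoly, charpolyOf_eq_charpoly] at h
  have hsq := (adjMatrix_isHermitian G).sum_eigenvalues_eq_of_charpoly_eq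
    (adjMatrix_isHermitian H) h (fun x => (X ^ 2 : ℝ[X]).eval x)
  rw [← IsHermitian.trace_aeval, ← IsHermitian.trace_aeval, map_pow, aeval_X, map_pow, aeval_X,
    sq, sq, hG.trace_adjMatrix_mul_self, hH.trace_adjMatrix_mul_self] at hsq
  exact_mod_cast mul_left_cancel₀ (by positivity) hsq

theorem IsRegularOfDegree.charpolyOf_ne_compl [Nonempty V] [DecidableRel G.Adj] {k : ℕ}
    (hG : G.IsRegularOfDegree k) (hk : 2 * k + 1 ≠ Fintype.card V) :
    charpolyOf G ≠ charpolyOf Gᶜ := fun h => hk <| by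
  have := hG.eq_of_charpolyOf_eq hG.compl h
  have := Fintype.card_pos (α := V)
  omega

end Spectrum

section AdjMatrix

variable {V W : Type*} [DecidableEq V] [DecidableEq W]

theorem adjMatrix_top_add_one_mul_sub [Fintype W] :
    ((⊤ : SimpleGraph W).adjMatrix ℝ + 1) *
      ((⊤ : SimpleGraph W).adjMatrix ℝ - algebraMap ℝ _ (Fintype.card W - 1)) = 0 := by
  have hK : (⊤ : SimpleGraph W).adjMatrix ℝ = of 1 - 1 := by
    ext i j
    by_cases h : i = j <;> simp [one_apply, h]
  have hJ : (of 1 : Matrix W W ℝ) * of 1 = (Fintype.card W : ℝ) • of 1 := by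
    ext
    simp [mul_apply]
  rw [hK, sub_add_cancel, Algebra.algebraMap_eq_smul_one, mul_sub, mul_sub, mul_smul_comm, hJ,
    mul_one]
  module

theorem adjMatrix_boxProd (G : SimpleGraph V) (H : SimpleGraph W) [DecidableRel G.Adj]
    [DecidableRel H.Adj] [DecidableRel (G □ H).Adj] :
    (G □ H).adjMatrix ℝ = G.adjMatrix ℝ ⊗ₖ 1 + 1 ⊗ₖ H.adjMatrix ℝ := by
  ext ⟨a, b⟩ ⟨a', b'⟩
  by_cases ha : a = a' <;> by_cases hb : b = b' <;>
    simp [boxProd_adj, kroneckerMap_apply, one_apply, ha, hb]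

theorem adjMatrix_compl_boxProd_top [DecidableRel (⊤ □ ⊤ : SimpleGraph (V × W))ᶜ.Adj] :
    (⊤ □ ⊤ : SimpleGraph (V × W))ᶜ.adjMatrix ℝ =
      (⊤ : SimpleGraph V).adjMatrix ℝ ⊗ₖ (⊤ : SimpleGraph W).adjMatrix ℝ := by
  ext ⟨a, b⟩ ⟨a', b'⟩
  by_cases ha : a = a' <;> by_cases hb : b = b' <;>
    simp [boxProd_adj, kroneckerMap_apply, ha, hb]

end AdjMatrix

end SimpleGraph

section Prism

variable (W : Type*) [Fintype W] [DecidableEq W]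

-- A `def` hides `boxProdFintypeNeighborSet`, so that its `LocallyFinite` instances are the ones
-- built from the classical `DecidableRel`, as for its complement.
def prismGraph : SimpleGraph (Fin 2 × W) := ⊤ □ ⊤

def prismRungs : Matrix (Fin 2 × W) (Fin 2 × W) ℝ :=
  (⊤ : SimpleGraph (Fin 2)).adjMatrix ℝ ⊗ₖ 1

def prismLayers : Matrix (Fin 2 × W) (Fin 2 × W) ℝ := 1 ⊗ₖ (⊤ : SimpleGraph W).adjMatrix ℝ

theorem prismRungs_mul_self : prismRungs W * prismRungs W = 1 := by
  have hK₂ :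
      (⊤ : SimpleGraph (Fin 2)).adjMatrix ℝ * (⊤ : SimpleGraph (Fin 2)).adjMatrix ℝ = 1 := by
    ext i j
    fin_cases i <;> fin_cases j <;> simp [mul_apply, Fin.sum_univ_two]
  rw [prismRungs, ← mul_kronecker_mul, hK₂, mul_one, one_kronecker_one]

theorem prismLayers_add_one_mul_sub :
    (prismLayers W + 1) * (prismLayers W - algebraMap ℝ _ (Fintype.card W - 1)) = 0 := by
  have kronecker_sub (M N : Matrix W W ℝ) :
      (1 : Matrix (Fin 2) (Fin 2) ℝ) ⊗ₖ (M - N) = 1 ⊗ₖ M - 1 ⊗ₖ N := by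
    ext
    simp [mul_sub]
  rw [prismLayers, Algebra.algebraMap_eq_smul_one, ← one_kronecker_one, ← kronecker_smul,
    ← kronecker_add, ← kronecker_sub, ← mul_kronecker_mul, ← Algebra.algebraMap_eq_smul_one,
    adjMatrix_top_add_one_mul_sub, kronecker_zero]

theorem commute_prismRungs_prismLayers : Commute (prismRungs W) (prismLayers W) := by
  rw [Commute, SemiconjBy, prismRungs, prismLayers, ← mul_kronecker_mul, ← mul_kronecker_mul,
    mul_one, one_mul, one_mul, mul_one]

omit [Fintype W] in
theorem adjMatrix_prismGraph [DecidableRel (prismGraph W).Adj] :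
    (prismGraph W).adjMatrix ℝ = prismRungs W + prismLayers W := by
  convert adjMatrix_boxProd (⊤ : SimpleGraph (Fin 2)) (⊤ : SimpleGraph W) <;> rfl

theorem adjMatrix_compl_prismGraph [DecidableRel (prismGraph W)ᶜ.Adj] :
    (prismGraph W)ᶜ.adjMatrix ℝ = prismRungs W * prismLayers W := by
  rw [prismRungs, prismLayers, ← mul_kronecker_mul, mul_one, one_mul]
  convert adjMatrix_compl_boxProd_top (V := Fin 2) (W := W)
  rfl

theorem trace_one_sub_prismRungs_mul (c : ℝ) :
    ((1 - prismRungs W) * (prismLayers W - algebraMap ℝ _ c)).trace =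
      -(2 * Fintype.card W * c) := by
  have hrungs : (prismRungs W).trace = 0 := by
    rw [prismRungs, trace_kronecker, trace_adjMatrix, zero_mul]
  have hlayers : (prismLayers W).trace = 0 := by
    rw [prismLayers, trace_kronecker, trace_adjMatrix, mul_zero]
  have hcrown : (prismRungs W * prismLayers W).trace = 0 := by
    rw [← adjMatrix_compl_prismGraph, trace_adjMatrix]
  rw [one_sub_mul, mul_sub, Algebra.algebraMap_eq_smul_one, mul_smul_comm, mul_one]
  simp only [trace_sub, trace_smul, trace_one, hrungs, hlayers, hcrown, Fintype.card_prod,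
    Fintype.card_fin]
  push_cast
  ring

theorem isRegularOfDegree_prismGraph [Nonempty W] [DecidableRel (prismGraph W).Adj] :
    (prismGraph W).IsRegularOfDegree (Fintype.card W) := fun v => by
  have h := degree_boxProd (G := (⊤ : SimpleGraph (Fin 2))) (H := (⊤ : SimpleGraph W)) v
  rw [IsRegularOfDegree.top.degree_eq, IsRegularOfDegree.top.degree_eq, Fintype.card_fin] at h
  have := Fintype.card_pos (α := W)
  rw [show 2 - 1 + (Fintype.card W - 1) = Fintype.card W by omega] at h
  convert h
  rfl

end Prism

section PrismSpectrum

variable (W : Type*) [Fintype W] [DecidableEq W]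

/-- Commutative, so that the identities of section `Involution` hold for the rung and layer
matrices. -/
abbrev prismAlgebra : Subalgebra ℝ (Matrix (Fin 2 × W) (Fin 2 × W) ℝ) :=
  Algebra.adjoin ℝ {prismRungs W, prismLayers W}

open scoped IsMulCommutative in
instance : CommRing (prismAlgebra W) :=
  have := Algebra.isMulCommutative_adjoin ℝ (s := {prismRungs W, prismLayers W}) <| by
    simp only [Set.mem_insert_iff, Set.mem_singleton_iff]
    have h := commute_prismRungs_prismLayers W
    rintro x (rfl | rfl) y (rfl | rfl) <;> first | rfl | exact h.eq | exact h.symm.eq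
  inferInstance

def prismAlgebra.rungs : prismAlgebra W := ⟨prismRungs W, Algebra.subset_adjoin (by simp)⟩

def prismAlgebra.layers : prismAlgebra W := ⟨prismLayers W, Algebra.subset_adjoin (by simp)⟩

theorem prismAlgebra.rungs_mul_self : rungs W * rungs W = 1 :=
  Subtype.ext (prismRungs_mul_self W)

theorem prismAlgebra.layers_add_one_mul_sub :
    (layers W + 1) * (layers W - algebraMap ℝ _ (Fintype.card W - 1)) = 0 :=
  Subtype.ext (prismLayers_add_one_mul_sub W)

theorem aeval_adjMatrix_prismGraph_cubic :
    aeval ((prismGraph W).adjMatrix ℝ)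
        (X * (X - C (Fintype.card W : ℝ)) * (X - C (Fintype.card W - 2 : ℝ))) =
      algebraMap ℝ _ (Fintype.card W + 2) *
        ((1 - prismRungs W) * (prismLayers W - algebraMap ℝ _ (Fintype.card W - 1))) := by
  rw [adjMatrix_prismGraph]
  exact (aeval_subalgebra_coe _ _ (prismAlgebra.rungs W + prismAlgebra.layers W)).symm.trans
    (congrArg Subtype.val (aeval_add_cubic_of_mul_self_eq_one (prismAlgebra.rungs_mul_self W)
      (prismAlgebra.layers_add_one_mul_sub W)))

theorem aeval_adjMatrix_prismGraph_quartic :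
    aeval ((prismGraph W).adjMatrix ℝ)
      (X * (X + 2) * (X - C (Fintype.card W : ℝ)) * (X - C (Fintype.card W - 2 : ℝ))) = 0 := by
  rw [adjMatrix_prismGraph]
  exact (aeval_subalgebra_coe _ _ (prismAlgebra.rungs W + prismAlgebra.layers W)).symm.trans
    (congrArg Subtype.val (aeval_add_quartic_of_mul_self_eq_one (prismAlgebra.rungs_mul_self W)
      (prismAlgebra.layers_add_one_mul_sub W)))

theorem aeval_adjMatrix_compl_prismGraph_quartic :
    aeval ((prismGraph W)ᶜ.adjMatrix ℝ)
      ((X ^ 2 - 1) * (X ^ 2 - C ((Fintype.card W - 1 : ℝ) ^ 2))) = 0 := by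
  rw [adjMatrix_compl_prismGraph]
  exact (aeval_subalgebra_coe _ _ (prismAlgebra.rungs W * prismAlgebra.layers W)).symm.trans
    (congrArg Subtype.val (aeval_mul_quartic_of_mul_self_eq_one (prismAlgebra.rungs_mul_self W)
      (prismAlgebra.layers_add_one_mul_sub W)))

theorem energy_prismGraph (hW : 2 ≤ Fintype.card W) :
    energy (prismGraph W) = 4 * (Fintype.card W - 1) := by
  have hτ : (2 : ℝ) ≤ Fintype.card W := by exact_mod_cast hW
  set τ := (Fintype.card W : ℝ) with hτ_def
  -- `|x| = x` at `t, t - 2, 0`; the cubic term vanishes there and corrects the value at `-2`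
  rw [energy_eq_trace_aeval (aeval_adjMatrix_prismGraph_quartic W)
    (q := X - C (2 / (τ * (τ + 2))) * (X * (X - C τ) * (X - C (τ - 2))))]
  · rw [map_sub, map_mul, aeval_X, aeval_C, aeval_adjMatrix_prismGraph_cubic, trace_sub,
      trace_adjMatrix, ← Algebra.smul_def, ← Algebra.smul_def, trace_smul, trace_smul,
      trace_one_sub_prismRungs_mul, ← hτ_def, smul_eq_mul, smul_eq_mul]
    have : τ + 2 ≠ 0 := by linarith
    have : τ ≠ 0 := by linarith
    field_simp
    ring
  · intro x hx
    simp only [IsRoot, eval_mul, eval_sub, eval_add, eval_X, eval_C, eval_ofNat, mul_eq_zero,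
      sub_eq_zero] at hx ⊢
    rcases hx with ((rfl | hx) | rfl) | rfl
    · simp
    · rw [eq_neg_of_add_eq_zero_left hx, abs_of_neg (by norm_num)]
      field_simp
      ring
    · rw [abs_of_nonneg (by linarith)]
      ring
    · rw [abs_of_nonneg (by linarith)]
      ring

theorem energy_compl_prismGraph [Nonempty W] :
    energy (prismGraph W)ᶜ = 4 * (Fintype.card W - 1) := by
  have hτ : (1 : ℝ) ≤ Fintype.card W := by exact_mod_cast Fintype.card_pos
  set τ := (Fintype.card W : ℝ)
  -- `|x| = (x² + t - 1) / t` for `x² ∈ {1, (t - 1)²}`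
  rw [energy_eq_trace_aeval (aeval_adjMatrix_compl_prismGraph_quartic W)
    (q := C τ⁻¹ * (X ^ 2 + C (τ - 1)))]
  · have hn := Fintype.card_pos (α := W)
    have hdeg : Fintype.card (Fin 2 × W) - 1 - Fintype.card W = Fintype.card W - 1 := by
      simp only [Fintype.card_prod, Fintype.card_fin]
      omega
    have hreg := (isRegularOfDegree_prismGraph W).compl.trace_adjMatrix_mul_self
    rw [hdeg, Nat.cast_sub hn] at hreg
    rw [map_mul, aeval_C, map_add, aeval_C, map_pow, aeval_X, ← Algebra.smul_def, trace_smul,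
      trace_add, sq, hreg, Algebra.algebraMap_eq_smul_one, trace_smul, trace_one,
      Fintype.card_prod, Fintype.card_fin, smul_eq_mul, smul_eq_mul]
    push_cast
    field_simp
    ring
  · intro x hx
    simp only [IsRoot, eval_mul, eval_sub, eval_add, eval_pow, eval_X, eval_C, eval_one,
      mul_eq_zero, sub_eq_zero] at hx ⊢
    rw [← sq_abs] at hx ⊢
    rcases hx with hx | hx
    · rw [← one_pow 2, pow_left_inj₀ (abs_nonneg x) zero_le_one two_ne_zero] at hx
      rw [hx]
      field_simp
      ring
    · rw [pow_left_inj₀ (abs_nonneg x) (by linarith) two_ne_zero] at hx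
      rw [hx]
      field_simp
      ring

end PrismSpectrum

/-- For every `t ≥ 2` there is a regular graph on `2t` vertices which is
equienergetic and non-isospectral with its complement. -/
theorem exists_regular_equienergetic_non_isospectral (t : ℕ) (ht : 2 ≤ t) :
    ∃ (G : SimpleGraph (Fin (2 * t))) (k : ℕ),
      G.IsRegularOfDegree k ∧ energy G = energy Gᶜ ∧ charpolyOf G ≠ charpolyOf Gᶜ := by
  have : Nonempty (Fin t) := ⟨⟨0, by omega⟩⟩
  -- a relabelled copy of the prism, as a bare variable so that its decidability instances are
  -- the classical ones of the statement
  obtain ⟨G, ⟨e⟩⟩ : ∃ G : SimpleGraph (Fin (2 * t)), Nonempty (prismGraph (Fin t) ≃g G) :=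
    ⟨_, ⟨Iso.map finProdFinEquiv _⟩⟩
  have hreg : G.IsRegularOfDegree t :=
    e.isRegularOfDegree (by simpa using isRegularOfDegree_prismGraph (Fin t))
  have : Nonempty (Fin (2 * t)) := ⟨⟨0, by omega⟩⟩
  refine ⟨G, t, hreg, ?_, hreg.charpolyOf_ne_compl (by simp)⟩
  rw [← e.energy_eq, ← e.compl.energy_eq, energy_prismGraph _ (by simpa),
    energy_compl_prismGraph]
end

section
/- Let d : ℕ with 1 ≤ d and let G be a simple graph on a finite vertex type with G.IsSRGWith (4*d+1) (2*d) (d-1) d (a conference graph). Then E(G) = 2*d*(1 + Real.sqrt (4*d+1)). -/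
/-!
The adjacency matrix `A` of a conference graph satisfies `A² + A - d = dJ` and `AJ = 2dJ`, so
every eigenvalue is `2d` or a root `r ≥ 0 > s` of `X² + X - d`. Comparing the traces of `A` and
`A²` (namely `0` and `2d(4d+1)`) with the power sums of the eigenvalues forces `2d` to be simple
and the remaining eigenvalues to sum to `-2d`. On `{r, s}` the absolute value agrees with the
affine map `x ↦ (2d - x)/√(4d+1)`, which turns the energy into a linear function of that sum.
-/

open Finset

open Polynomial Matrix

namespace Matrix.IsHermitian

variable {𝕜 n : Type*} [RCLike 𝕜] [Fintype n] [DecidableEq n] {A : Matrix n n 𝕜}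

theorem trace_pow_eq_sum_eigenvalues_pow (hA : A.IsHermitian) (k : ℕ) :
    (A ^ k).trace = ∑ i, (hA.eigenvalues i : 𝕜) ^ k := by
  conv_lhs => rw [hA.spectral_theorem]
  rw [← map_pow, Unitary.conjStarAlgAut_apply, trace_mul_cycle,
    Unitary.coe_star_mul_self, one_mul, diagonal_pow, trace_diagonal]
  rfl

theorem eval_eigenvalues_eq_zero (hA : A.IsHermitian) {p : ℝ[X]} (hp : aeval A p = 0) (i : n) :
    p.eval (hA.eigenvalues i) = 0 := by
  have : Nonempty n := ⟨i⟩
  simpa [hp, spectrum.zero_eq] using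
    spectrum.subset_polynomial_aeval A p ⟨_, hA.eigenvalues_mem_spectrum_real i, rfl⟩

end Matrix.IsHermitian

namespace SimpleGraph

variable {V α : Type*} {G : SimpleGraph V} [DecidableRel G.Adj]

theorem compl_adjMatrix_eq_of_one_sub [DecidableEq V] [AddGroup α] [One α] :
    Gᶜ.adjMatrix α = of 1 - 1 - G.adjMatrix α := by
  ext v w
  by_cases hvw : v = w <;> by_cases hadj : G.Adj v w <;> simp [hvw, hadj, one_apply, compl_adj]

variable [Fintype V]

theorem IsRegularOfDegree.adjMatrix_mul_of_one [NonAssocSemiring α] {k : ℕ}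
    (h : G.IsRegularOfDegree k) : G.adjMatrix α * of 1 = (k : α) • of 1 := by
  ext v w
  simp [h v]

theorem IsRegularOfDegree.trace_adjMatrix_sq [DecidableEq V] [Semiring α] {k : ℕ}
    (h : G.IsRegularOfDegree k) : (G.adjMatrix α ^ 2).trace = Fintype.card V * k := by
  simp only [trace, Matrix.diag, sq, adjMatrix_mul_self_apply_self, h _, sum_const, card_univ,
    nsmul_eq_mul]

theorem IsSRGWith.aeval_adjMatrix_eq_zero [DecidableEq V] [CommRing α] {n k ℓ μ : ℕ}
    (h : G.IsSRGWith n k ℓ μ) :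
    aeval (G.adjMatrix α) ((X - C (k : α)) * (X ^ 2 - C ((ℓ : α) - μ) * X - C ((k : α) - μ)))
      = 0 := by
  have hsq : G.adjMatrix α ^ 2 - ((ℓ : α) - μ) • G.adjMatrix α - ((k : α) - μ) • 1
      = (μ : α) • of 1 := by
    rw [h.matrix_eq, compl_adjMatrix_eq_of_one_sub]
    simp only [← Nat.cast_smul_eq_nsmul α]
    module
  rw [map_mul, map_sub, map_sub, map_sub]
  simp only [aeval_X, aeval_C, map_pow, map_mul, Algebra.algebraMap_eq_smul_one, smul_mul_assoc,
    one_mul, hsq]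
  rw [mul_smul_comm, sub_mul, h.regular.adjMatrix_mul_of_one, smul_mul_assoc, one_mul, sub_self,
    smul_zero]

end SimpleGraph

theorem Finset.sum_comp_eq_card_filter_mul_add {ι α β : Type*} [Fintype ι] [DecidableEq α]
    [NonAssocSemiring β] (g : ι → α) (f : α → β) (a : α) :
    ∑ i, f (g i) = #{i | g i = a} * f a + ∑ i with g i ≠ a, f (g i) := by
  rw [← sum_filter_add_sum_filter_not univ (g · = a), sum_eq_card_nsmul (b := f a), nsmul_eq_mul]
  intro i hi
  rw [(mem_filter.1 hi).2]

theorem abs_mul_sqrt_eq_of_sq_add_self_eq {x d : ℝ} (hd : 0 ≤ d) (hx : x ^ 2 + x = d) :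
    |x| * √(4 * d + 1) = 2 * d - x := by
  rw [show 4 * d + 1 = (2 * x + 1) ^ 2 by rw [← hx]; ring, Real.sqrt_sq_eq_abs, ← abs_mul,
    abs_of_nonneg (by nlinarith)]
  linear_combination 2 * hx

section ConferenceSpectrum

variable {ι : Type*} [Fintype ι]

/-- The spectral data of a conference graph `srg(4d+1, 2d, d-1, d)`; the power sums of orders
`0, 1, 2` are the traces of `1`, `A` and `A²`. -/
structure IsConferenceSpectrum (d : ℝ) (μ : ι → ℝ) : Prop where
  eq_or_sq_add_self_eq (i : ι) : μ i = 2 * d ∨ μ i ^ 2 + μ i = d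
  card_eq : (Fintype.card ι : ℝ) = 4 * d + 1
  sum_eq_zero : ∑ i, μ i = 0
  sum_sq_eq : ∑ i, μ i ^ 2 = 2 * d * (4 * d + 1)

namespace IsConferenceSpectrum

variable {d : ℝ} {μ : ι → ℝ}

theorem sq_add_self_eq (h : IsConferenceSpectrum d μ) {i : ι}
    (hi : i ∈ ({i | μ i ≠ 2 * d} : Finset ι)) :
    μ i ^ 2 + μ i = d :=
  (h.eq_or_sq_add_self_eq i).resolve_left (mem_filter.1 hi).2

theorem card_filter_eq_add_card_filter_ne (h : IsConferenceSpectrum d μ) :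
    (#{i | μ i = 2 * d} : ℝ) + #{i | μ i ≠ 2 * d} = 4 * d + 1 := by
  rw [← h.card_eq, ← card_univ]
  exact_mod_cast card_filter_add_card_filter_not _

theorem sum_filter_ne_eq (h : IsConferenceSpectrum d μ) :
    ∑ i with μ i ≠ 2 * d, μ i = -(2 * d * #{i | μ i = 2 * d}) := by
  have hsum := sum_comp_eq_card_filter_mul_add μ (fun x => x) (2 * d)
  rw [h.sum_eq_zero] at hsum
  linear_combination -hsum

theorem card_filter_eq_one (h : IsConferenceSpectrum d μ) (hd : 0 < d) :
    (#{i | μ i = 2 * d} : ℝ) = 1 := by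
  have hsq := sum_comp_eq_card_filter_mul_add μ (· ^ 2) (2 * d)
  have hsq_off : ∑ i with μ i ≠ 2 * d, μ i ^ 2 = ∑ i with μ i ≠ 2 * d, (d - μ i) :=
    sum_congr rfl fun i hi => by linear_combination h.sq_add_self_eq hi
  rw [h.sum_sq_eq, hsq_off, sum_sub_distrib, sum_const, nsmul_eq_mul, h.sum_filter_ne_eq] at hsq
  have : (#{i | μ i = 2 * d} : ℝ) * (d * (4 * d + 1)) = 1 * (d * (4 * d + 1)) := by
    linear_combination -hsq - d * h.card_filter_eq_add_card_filter_ne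
  exact mul_right_cancel₀ (by positivity) this

theorem sum_abs_eq (h : IsConferenceSpectrum d μ) (hd : 0 < d) :
    ∑ i, |μ i| = 2 * d * (1 + √(4 * d + 1)) := by
  have ht := h.card_filter_eq_one hd
  have hc_sq : √(4 * d + 1) ^ 2 = 4 * d + 1 := Real.sq_sqrt (by positivity)
  have hoff : ∑ i with μ i ≠ 2 * d, |μ i| = 2 * d * √(4 * d + 1) := by
    refine mul_right_cancel₀ (by positivity : √(4 * d + 1) ≠ 0) ?_
    rw [sum_mul, sum_congr rfl fun i hi => abs_mul_sqrt_eq_of_sq_add_self_eq hd.le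
      (h.sq_add_self_eq hi), sum_sub_distrib, sum_const, nsmul_eq_mul, h.sum_filter_ne_eq, ht]
    linear_combination 2 * d * h.card_filter_eq_add_card_filter_ne - 2 * d * ht - 2 * d * hc_sq
  rw [sum_comp_eq_card_filter_mul_add μ abs (2 * d), ht, hoff, abs_of_pos (by positivity)]
  ring

end IsConferenceSpectrum

end ConferenceSpectrum

theorem SimpleGraph.IsSRGWith.isConferenceSpectrum {V : Type*} [Fintype V] [DecidableEq V]
    {G : SimpleGraph V} [DecidableRel G.Adj] {d : ℕ} (hd : 1 ≤ d)
    (h : G.IsSRGWith (4 * d + 1) (2 * d) (d - 1) d) :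
    IsConferenceSpectrum (d : ℝ) (adjMatrix_isHermitian G).eigenvalues where
  eq_or_sq_add_self_eq i := by
    have := (adjMatrix_isHermitian G).eval_eigenvalues_eq_zero
      (h.aeval_adjMatrix_eq_zero (α := ℝ)) i
    simp only [eval_mul, eval_sub, eval_pow, eval_X, eval_C, Nat.cast_sub hd, Nat.cast_mul,
      Nat.cast_ofNat, Nat.cast_one, mul_eq_zero] at this
    exact this.imp (fun h1 => by linarith) (fun h1 => by linarith)
  card_eq := by rw [h.card]; push_cast; ring
  sum_eq_zero := by
    simpa using ((adjMatrix_isHermitian G).trace_eq_sum_eigenvalues).symm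
  sum_sq_eq := by
    have := (adjMatrix_isHermitian G).trace_pow_eq_sum_eigenvalues_pow 2
    rw [h.regular.trace_adjMatrix_sq, h.card] at this
    simp only [RCLike.ofReal_real_eq_id, id] at this
    rw [← this]; push_cast; ring

theorem energy_eq_sum_abs_eigenvalues {V : Type*} [Fintype V] [DecidableEq V] (G : SimpleGraph V)
    [DecidableRel G.Adj] : energy G = ∑ i, |(adjMatrix_isHermitian G).eigenvalues i| := by
  unfold energy adjEig
  congr!

/-- A conference graph `srg(4d+1, 2d, d-1, d)` has energy
`2d(1 + √(4d+1))`. -/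
theorem conference_graph_energy {V : Type*} [Fintype V] [DecidableEq V]
    (G : SimpleGraph V) [DecidableRel G.Adj] (d : ℕ) (hd : 1 ≤ d)
    (h : G.IsSRGWith (4 * d + 1) (2 * d) (d - 1) d) :
    energy G = 2 * (d : ℝ) * (1 + Real.sqrt (4 * (d : ℝ) + 1)) := by
  rw [energy_eq_sum_abs_eigenvalues]
  exact (h.isConferenceSpectrum hd).sum_abs_eq (by exact_mod_cast hd)
end
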